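/- Let M, Ω ∈ ℝ^{n×n} be symmetric positive semidefinite matrices such that Ω − M is positive semidefinite, and let ρ : ℝ → ℝ be a loss kernel (differentiable on [0,∞), concave on [0,∞), with 0 ≤ ρ'(s) ≤ 1 for all s ≥ 0). Then for all matrices X, X⁰ ∈ ℝ^{d×n}, setting ω := ρ'(‖X⁰‖²_M), one has (1/2)·ω·‖X − X⁰‖²_Ω + ω·⟨X⁰M, X − X⁰⟩ + (1/2)·ρ(‖X⁰‖²_M) ≥ (1/2)·ρ(‖X‖²_M), and equality holds when X = X⁰. -/

import Mathlib

open Matrix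

/-
The loss is a concave function of `t = ‖X‖²_M`, so it lies below its tangent line at
`t₀ = ‖X₀‖²_M`. Expanding `‖X₀ + Δ‖²_M = t₀ + 2⟨X₀M, Δ⟩ + ‖Δ‖²_M`, the tangent line is
affine in `t - t₀ = 2⟨X₀M, Δ⟩ + ‖Δ‖²_M`, and since its slope `ω` is nonnegative, replacing
`‖Δ‖²_M` by the larger `‖Δ‖²_Ω` only increases it.
-/

theorem ConcaveOn.le_add_mul_sub_of_hasDerivWithinAt {S : Set ℝ} {f : ℝ → ℝ} {f' x y : ℝ}
    (hf : ConcaveOn ℝ S f) (hx : x ∈ S) (hy : y ∈ S) (hf' : HasDerivWithinAt f f' S x) :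
    f y ≤ f x + f' * (y - x) := by
  rcases lt_trichotomy y x with hyx | rfl | hxy
  · have := hf.le_slope_of_hasDerivWithinAt hy hx hyx hf'
    rw [slope_def_field, le_div_iff₀ (sub_pos.mpr hyx)] at this
    linarith
  · simp
  · have := hf.slope_le_of_hasDerivWithinAt hx hy hxy hf'
    rw [slope_def_field, div_le_iff₀ (sub_pos.mpr hxy)] at this
    linarith

namespace Matrix

variable {m n : Type*} [Fintype m] [Fintype n]

theorem PosSemidef.trace_mul_mul_transpose_nonneg {P : Matrix n n ℝ} (hP : P.PosSemidef)
    (Y : Matrix m n ℝ) : 0 ≤ (Y * P * Yᵀ).trace := by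
  simpa [conjTranspose_eq_transpose_of_trivial] using (hP.mul_mul_conjTranspose_same Y).trace_nonneg

theorem trace_mul_mul_transpose_le_of_posSemidef_sub {M Ω : Matrix n n ℝ}
    (h : (Ω - M).PosSemidef) (Y : Matrix m n ℝ) :
    (Y * M * Yᵀ).trace ≤ (Y * Ω * Yᵀ).trace := by
  have := h.trace_mul_mul_transpose_nonneg Y
  rw [Matrix.mul_sub, Matrix.sub_mul, trace_sub] at this
  linarith

theorem trace_add_mul_mul_transpose_add {R : Type*} [CommRing R] {M : Matrix n n R}
    (hM : M.IsSymm) (A B : Matrix m n R) :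
    ((A + B) * M * (A + B)ᵀ).trace
      = (A * M * Aᵀ).trace + 2 * (A * M * Bᵀ).trace + (B * M * Bᵀ).trace := by
  have hswap : (B * M * Aᵀ).trace = (A * M * Bᵀ).trace := by
    rw [← trace_transpose, transpose_mul, transpose_mul, transpose_transpose, hM.eq,
      Matrix.mul_assoc]
  simp only [Matrix.add_mul, Matrix.mul_add, transpose_add, trace_add, hswap]
  ring

end Matrix

theorem loss_majorization_dominating_general {d n : ℕ}
    (M Ω : Matrix (Fin n) (Fin n) ℝ)
    (hM : M.PosSemidef) (hΩM : (Ω - M).PosSemidef)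
    (ρ ρ' : ℝ → ℝ)
    (hdiff : ∀ s ∈ Set.Ici (0:ℝ), HasDerivWithinAt ρ (ρ' s) (Set.Ici 0) s)
    (hconc : ConcaveOn ℝ (Set.Ici 0) ρ)
    (hρ' : ∀ s : ℝ, 0 ≤ s → 0 ≤ ρ' s ∧ ρ' s ≤ 1)
    (X X₀ : Matrix (Fin d) (Fin n) ℝ) :
    (1/2) * ρ' ((X₀ * M * X₀ᵀ).trace) * (((X - X₀) * Ω * (X - X₀)ᵀ).trace)
      + ρ' ((X₀ * M * X₀ᵀ).trace) * (((X₀ * M) * (X - X₀)ᵀ).trace)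
      + (1/2) * ρ ((X₀ * M * X₀ᵀ).trace)
      ≥ (1/2) * ρ ((X * M * Xᵀ).trace)
    ∧ (X = X₀ →
      (1/2) * ρ' ((X₀ * M * X₀ᵀ).trace) * (((X - X₀) * Ω * (X - X₀)ᵀ).trace)
      + ρ' ((X₀ * M * X₀ᵀ).trace) * (((X₀ * M) * (X - X₀)ᵀ).trace)
      + (1/2) * ρ ((X₀ * M * X₀ᵀ).trace)
      = (1/2) * ρ ((X * M * Xᵀ).trace)) := by
  refine ⟨?_, fun hX => by simp [hX]⟩
  have ht₀ := hM.trace_mul_mul_transpose_nonneg X₀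
  have hexpand := trace_add_mul_mul_transpose_add (isHermitian_iff_isSymm.mp hM.1) X₀ (X - X₀)
  rw [add_sub_cancel] at hexpand
  have htangent := hconc.le_add_mul_sub_of_hasDerivWithinAt ht₀
    (hM.trace_mul_mul_transpose_nonneg X) (hdiff _ ht₀)
  have hdom := trace_mul_mul_transpose_le_of_posSemidef_sub hΩM (X - X₀)
  have hω := (hρ' _ ht₀).1
  nlinarith [mul_le_mul_of_nonneg_left hdom hω]

/-- Majorization of a robust loss term with a dominating weight
matrix `Ω ⪰ M` (Proposition 2 of the paper). Here `‖Y‖²_M = trace (Y * M * Yᵀ)`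
and `⟨A, B⟩ = trace (A * Bᵀ)`. -/
theorem loss_majorization_dominating {d n : ℕ}
    (M Ω : Matrix (Fin n) (Fin n) ℝ)
    (hM : M.PosSemidef) (hΩ : Ω.PosSemidef) (hΩM : (Ω - M).PosSemidef)
    (ρ ρ' : ℝ → ℝ)
    (hdiff : ∀ s ∈ Set.Ici (0:ℝ), HasDerivWithinAt ρ (ρ' s) (Set.Ici 0) s)
    (hconc : ConcaveOn ℝ (Set.Ici 0) ρ)
    (hρ' : ∀ s : ℝ, 0 ≤ s → 0 ≤ ρ' s ∧ ρ' s ≤ 1)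
    (X X₀ : Matrix (Fin d) (Fin n) ℝ) :
    (1/2) * ρ' ((X₀ * M * X₀ᵀ).trace) * (((X - X₀) * Ω * (X - X₀)ᵀ).trace)
      + ρ' ((X₀ * M * X₀ᵀ).trace) * (((X₀ * M) * (X - X₀)ᵀ).trace)
      + (1/2) * ρ ((X₀ * M * X₀ᵀ).trace)
      ≥ (1/2) * ρ ((X * M * Xᵀ).trace)
    ∧ (X = X₀ →
      (1/2) * ρ' ((X₀ * M * X₀ᵀ).trace) * (((X - X₀) * Ω * (X - X₀)ᵀ).trace)
      + ρ' ((X₀ * M * X₀ᵀ).trace) * (((X₀ * M) * (X - X₀)ᵀ).trace)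
      + (1/2) * ρ ((X₀ * M * X₀ᵀ).trace)
      = (1/2) * ρ ((X * M * Xᵀ).trace)) :=
  loss_majorization_dominating_general M Ω hM hΩM ρ ρ' hdiff hconc hρ' X X₀
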